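/- If X and Y are nonzero real Banach spaces, then t(X ⊕_1 Y) ≥ max{t(X), t(Y)}. -/

import Mathlib

/-!
If `(x, 0)` lies within `r` of a unit vector `(a, b)` of `X ⊕₁ Y`, then `‖x - a‖ + ‖b‖ < r`.
Since `‖a‖ + ‖b‖ = 1`, pushing `a` radially onto the unit sphere of `X` moves it by `‖b‖` (any
unit vector will do when `a = 0`), so finitely many unit vectors of `X` that are all within `r` of
one unit vector of `X ⊕₁ Y` are also within `r` of one unit vector of `X`. Thus every admissible
radius for `X ⊕₁ Y` is admissible for `X`, and for `Y` by symmetry of the sum.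
-/

/-- The thinness index `t(X)` of a normed space. -/
noncomputable def thinness (X : Type*) [NormedAddCommGroup X] : ℝ :=
  sInf {r : ℝ | 0 < r ∧ ∀ (n : ℕ) (x : Fin n → X), (∀ i, ‖x i‖ = 1) →
    ∀ ε : ℝ, 0 < ε → ∃ y : X, ‖y‖ = 1 ∧ ∀ i, ‖x i - y‖ < r + ε}

open NormedSpace

def thinnessRadii (X : Type*) [NormedAddCommGroup X] : Set ℝ :=
  {r : ℝ | 0 < r ∧ ∀ (n : ℕ) (x : Fin n → X), (∀ i, ‖x i‖ = 1) →
    ∀ ε : ℝ, 0 < ε → ∃ y : X, ‖y‖ = 1 ∧ ∀ i, ‖x i - y‖ < r + ε}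

section General

variable {X X' : Type*} [NormedAddCommGroup X] [NormedAddCommGroup X']

theorem thinness_eq_sInf_thinnessRadii : thinness X = sInf (thinnessRadii X) := rfl

theorem two_mem_thinnessRadii [NormedSpace ℝ X] [Nontrivial X] : 2 ∈ thinnessRadii X := by
  refine ⟨two_pos, fun n x hx ε hε => ?_⟩
  obtain ⟨y, hy⟩ := exists_norm_eq X zero_le_one
  refine ⟨y, hy, fun i => ?_⟩
  calc ‖x i - y‖ ≤ ‖x i‖ + ‖y‖ := norm_sub_le _ _
    _ < 2 + ε := by rw [hx i, hy]; linarith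

theorem thinness_le_of_thinnessRadii_subset (hne : (thinnessRadii X').Nonempty)
    (h : thinnessRadii X' ⊆ thinnessRadii X) : thinness X ≤ thinness X' :=
  csInf_le_csInf ⟨0, fun _ hr => hr.1.le⟩ hne h

theorem thinnessRadii_subset_of_linearIsometryEquiv {𝕜 : Type*} [Semiring 𝕜] [Module 𝕜 X]
    [Module 𝕜 X'] (e : X ≃ₗᵢ[𝕜] X') : thinnessRadii X' ⊆ thinnessRadii X := by
  rintro r ⟨hr, hrad⟩
  refine ⟨hr, fun n x hx ε hε => ?_⟩
  obtain ⟨y, hy, hxy⟩ := hrad n (e ∘ x) (by simpa using hx) ε hε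
  refine ⟨e.symm y, by simpa using hy, fun i => ?_⟩
  simpa [← e.norm_map (x i - e.symm y)] using hxy i

theorem thinness_congr {𝕜 : Type*} [Semiring 𝕜] [Module 𝕜 X] [Module 𝕜 X']
    (e : X ≃ₗᵢ[𝕜] X') : thinness X = thinness X' := by
  simp only [thinness_eq_sInf_thinnessRadii,
    (thinnessRadii_subset_of_linearIsometryEquiv e.symm).antisymm
      (thinnessRadii_subset_of_linearIsometryEquiv e)]

end General

section Normalize

variable {X : Type*} [NormedAddCommGroup X] [NormedSpace ℝ X]

theorem norm_sub_normalize {a : X} (ha : a ≠ 0) : ‖a - normalize a‖ = |‖a‖ - 1| := by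
  have h : a - normalize a = (‖a‖ - 1) • normalize a := by
    rw [sub_smul, one_smul, norm_smul_normalize]
  rw [h, norm_smul, norm_normalize_eq_one_iff.mpr ha, Real.norm_eq_abs, mul_one]

theorem exists_norm_eq_one_forall_norm_sub_le [Nontrivial X] {a : X} (ha : ‖a‖ ≤ 1) :
    ∃ u : X, ‖u‖ = 1 ∧ ∀ x, ‖x - u‖ ≤ ‖x - a‖ + (1 - ‖a‖) := by
  rcases eq_or_ne a 0 with rfl | ha0
  · obtain ⟨u, hu⟩ := exists_norm_eq X zero_le_one
    exact ⟨u, hu, fun x => by simpa [hu] using norm_sub_le x u⟩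
  · refine ⟨normalize a, norm_normalize_eq_one_iff.mpr ha0, fun x => ?_⟩
    calc ‖x - normalize a‖ ≤ ‖x - a‖ + ‖a - normalize a‖ :=
          norm_sub_le_norm_sub_add_norm_sub _ _ _
      _ = ‖x - a‖ + (1 - ‖a‖) := by
          rw [norm_sub_normalize ha0, abs_sub_comm, abs_of_nonneg (by linarith)]

end Normalize

theorem thinnessRadii_prodL1_subset_fst {X Y : Type*} [NormedAddCommGroup X] [NormedSpace ℝ X]
    [Nontrivial X] [NormedAddCommGroup Y] :
    thinnessRadii (WithLp 1 (X × Y)) ⊆ thinnessRadii X := by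
  rintro r ⟨hr, hrad⟩
  refine ⟨hr, fun n x hx ε hε => ?_⟩
  obtain ⟨w, hw, hxw⟩ := hrad n (fun i => WithLp.toLp 1 (x i, 0)) (by simpa using hx) ε hε
  rw [WithLp.prod_norm_eq_of_L1] at hw
  obtain ⟨u, hu, hau⟩ := exists_norm_eq_one_forall_norm_sub_le (a := w.fst)
    (by linarith [norm_nonneg w.snd])
  refine ⟨u, hu, fun i => ?_⟩
  have hi : ‖x i - w.fst‖ + ‖w.snd‖ < r + ε := by
    simpa [WithLp.prod_norm_eq_of_L1] using hxw i
  linarith [hau (x i)]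

theorem thinness_le_thinness_prodL1 {X Y : Type*} [NormedAddCommGroup X] [NormedSpace ℝ X]
    [Nontrivial X] [NormedAddCommGroup Y] [NormedSpace ℝ Y] :
    thinness X ≤ thinness (WithLp 1 (X × Y)) :=
  thinness_le_of_thinnessRadii_subset ⟨2, two_mem_thinnessRadii⟩ thinnessRadii_prodL1_subset_fst

theorem thinness_prodL1_ge_max
    (X Y : Type*) [NormedAddCommGroup X] [NormedSpace ℝ X] [Nontrivial X]
    [NormedAddCommGroup Y] [NormedSpace ℝ Y] [Nontrivial Y] :
    max (thinness X) (thinness Y) ≤ thinness (WithLp 1 (X × Y)) := by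
  refine max_le thinness_le_thinness_prodL1 ?_
  rw [thinness_congr (LinearIsometryEquiv.withLpProdComm 1 ℝ X Y)]
  exact thinness_le_thinness_prodL1
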